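/- Let μ : ℝ → ℝ be continuous with compact support and let δ > 0. For x₂ ≠ 0, define the local double layer heat potential across the flat boundary {x₂ = 0} (bounding the upper half-plane, with outward normal (0,-1)) by D_L(x₁, x₂) = ∫_0^δ ∫_ℝ (-x₂/(2t)) · exp(-((x₁-ξ)² + x₂²)/(4t))/(4πt) · μ(ξ) dξ dt. Then for every x₁ ∈ ℝ, the one-sided limits satisfy lim_{ε→0+} D_L(x₁, -ε) = μ(x₁)/2 and lim_{ε→0+} D_L(x₁, ε) = -μ(x₁)/2; that is, the local double layer heat potential exhibits the same jump of magnitude μ(x₁) across the boundary as the harmonic double layer potential. -/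

import Mathlib

open MeasureTheory

/-- The local double layer heat potential with short-time cutoff `δ` across the flat
boundary `{x₂ = 0}` (bounding the upper half-plane, outward normal `(0,-1)`),
with density `μ`, evaluated at the target point `(x₁, x₂)`. -/
noncomputable def flatLocalDoubleLayer (μ : ℝ → ℝ) (δ x₁ x₂ : ℝ) : ℝ :=
  ∫ t in (0:ℝ)..δ, ∫ ξ : ℝ,
    (-x₂ / (2 * t)) *
      (Real.exp (-((x₁ - ξ) ^ 2 + x₂ ^ 2) / (4 * t)) / (4 * Real.pi * t)) * μ ξ

section Aux
open Filter Set Real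

lemma tendsto_Ici_of_Ioi {f : ℝ → ℝ} {c : ℝ} (h0 : f 0 = c)
    (h : Filter.Tendsto f (nhdsWithin 0 (Set.Ioi 0)) (nhds c)) :
    Filter.Tendsto f (nhdsWithin 0 (Set.Ici 0)) (nhds c) := by
  have hs : Set.Ici (0:ℝ) = insert 0 (Set.Ioi 0) := by
    ext x; simp [le_iff_lt_or_eq, eq_comm, or_comm]
  rw [hs, nhdsWithin_insert, Filter.tendsto_sup]
  refine ⟨?_, h⟩
  exact Filter.tendsto_pure_left.2 fun s hs => by simpa [h0] using mem_of_mem_nhds hs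

lemma exp_neg_div_tendsto (R : ℝ) (hR : 0 < R) :
    Filter.Tendsto (fun t : ℝ => Real.exp (-R/(4*t))) (nhdsWithin 0 (Set.Ioi 0)) (nhds 0) := by
  have h2 : Filter.Tendsto (fun t : ℝ => R/4 * t⁻¹) (nhdsWithin 0 (Set.Ioi 0)) Filter.atTop :=
    Filter.Tendsto.const_mul_atTop (by positivity) tendsto_inv_nhdsGT_zero
  have h1 : Filter.Tendsto (fun t : ℝ => -R/(4*t)) (nhdsWithin 0 (Set.Ioi 0)) Filter.atBot := by
    have he : (fun t : ℝ => -R/(4*t)) = fun t : ℝ => -(R/4 * t⁻¹) := by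
      funext t; field_simp
    rw [he]; exact Filter.tendsto_neg_atBot_iff.mpr h2
  exact Real.tendsto_exp_atBot.comp h1

lemma exp_div_sq_tendsto (R : ℝ) (hR : 0 < R) :
    Filter.Tendsto (fun t : ℝ => Real.exp (-R/(4*t))/t^2) (nhdsWithin 0 (Set.Ioi 0)) (nhds 0) := by
  have h1 : Filter.Tendsto (fun x : ℝ => x^2 * Real.exp (-x)) Filter.atTop (nhds 0) :=
    tendsto_pow_mul_exp_neg_atTop_nhds_zero 2
  have h2 : Filter.Tendsto (fun u : ℝ => R/4*u) Filter.atTop Filter.atTop :=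
    Filter.Tendsto.const_mul_atTop (by positivity) tendsto_id
  have h3 : Filter.Tendsto (fun u : ℝ => (R/4*u)^2 * Real.exp (-(R/4*u))) Filter.atTop (nhds 0) :=
    h1.comp h2
  have h4 : Filter.Tendsto (fun u : ℝ => u^2 * Real.exp (-(R/4*u))) Filter.atTop (nhds 0) := by
    have he : (fun u : ℝ => u^2 * Real.exp (-(R/4*u)))
        = fun u : ℝ => (4/R)^2 * ((R/4*u)^2 * Real.exp (-(R/4*u))) := by
      funext u
      have hR' : R ≠ 0 := hR.ne'
      field_simp
    rw [he]
    simpa using h3.const_mul ((4/R)^2)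
  have h5 : Filter.Tendsto (fun t : ℝ => t⁻¹) (nhdsWithin 0 (Set.Ioi 0)) Filter.atTop :=
    tendsto_inv_nhdsGT_zero
  have h6 := h4.comp h5
  refine h6.congr' ?_
  filter_upwards [self_mem_nhdsWithin] with t (ht : t ∈ Set.Ioi (0:ℝ))
  have ht' : (t:ℝ) ≠ 0 := (Set.mem_Ioi.mp ht).ne'
  simp only [Function.comp]
  have harg : -R/(4*t) = -(R/4*t⁻¹) := by field_simp
  rw [harg, inv_pow]; ring


lemma contOn_exp_div_sq (R δ : ℝ) (hR : 0 < R) :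
    ContinuousOn (fun t : ℝ => Real.exp (-R/(4*t))/t^2) (Set.Icc 0 δ) := by
  intro t ht
  rcases eq_or_lt_of_le ht.1 with h|h
  · subst h
    have hval : (fun t : ℝ => Real.exp (-R/(4*t))/t^2) 0 = 0 := by norm_num
    unfold ContinuousWithinAt
    rw [hval]
    exact (tendsto_Ici_of_Ioi hval (exp_div_sq_tendsto R hR)).mono_left
      (nhdsWithin_mono _ Set.Icc_subset_Ici_self)
  · have h4 : (4:ℝ)*t ≠ 0 := by positivity
    have ht2 : t^2 ≠ 0 := by positivity
    exact (((continuousAt_const.div ((continuous_const.mul continuous_id).continuousAt) h4).rexp).div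
      (continuousAt_id.pow 2) ht2).continuousWithinAt

lemma tIntegral (R δ : ℝ) (hR : 0 < R) (hδ : 0 < δ) :
    ∫ t in (0:ℝ)..δ, Real.exp (-R/(4*t))/t^2 = 4/R * Real.exp (-R/(4*δ)) := by
  set G : ℝ → ℝ := fun t => if t ≤ 0 then 0 else 4/R * Real.exp (-R/(4*t)) with hG
  have hint : IntervalIntegrable (fun t : ℝ => Real.exp (-R/(4*t))/t^2) volume 0 δ := by
    apply ContinuousOn.intervalIntegrable
    rw [Set.uIcc_of_le hδ.le]
    exact contOn_exp_div_sq R δ hR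
  have hGcont : ContinuousOn G (Set.Icc 0 δ) := by
    intro t ht
    rcases eq_or_lt_of_le ht.1 with h|h
    · subst h
      have hval : G 0 = 0 := by simp [hG]
      unfold ContinuousWithinAt
      rw [hval]
      have htd : Filter.Tendsto G (nhdsWithin 0 (Set.Ioi 0)) (nhds 0) := by
        have := (exp_neg_div_tendsto R hR).const_mul (4/R)
        rw [mul_zero] at this
        refine this.congr' ?_
        filter_upwards [self_mem_nhdsWithin] with s hs
        simp [hG, not_le.mpr (Set.mem_Ioi.mp hs)]
      exact (tendsto_Ici_of_Ioi hval htd).mono_left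
        (nhdsWithin_mono _ Set.Icc_subset_Ici_self)
    · have : ContinuousAt G t := by
        have h4 : (4:ℝ)*t ≠ 0 := by positivity
        have hF : ContinuousAt (fun s : ℝ => 4/R * Real.exp (-R/(4*s))) t :=
          ((continuousAt_const.div ((continuous_const.mul continuous_id).continuousAt) h4).rexp).const_mul _
        apply hF.congr
        filter_upwards [lt_mem_nhds h] with s hs
        simp [hG, not_le.mpr hs]
      exact this.continuousWithinAt
  have hGderiv : ∀ t ∈ Set.Ioo 0 δ, HasDerivAt G (Real.exp (-R/(4*t))/t^2) t := by
    intro t ht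
    have ht0 : t ≠ 0 := ht.1.ne'
    have hF : HasDerivAt (fun s : ℝ => 4/R * Real.exp (-R/(4*s))) (Real.exp (-R/(4*t))/t^2) t := by
      have hinner : HasDerivAt (fun s : ℝ => -R/(4*s)) (R/4 * (t^2)⁻¹) t := by
        have hfun : (fun s : ℝ => -R/(4*s)) = fun s : ℝ => -R/4 * s⁻¹ := by
          funext s; rw [div_eq_mul_inv, div_eq_mul_inv, mul_inv]; ring
        rw [hfun]
        have h2 := (hasDerivAt_inv ht0).const_mul (-R/4)
        exact h2.congr_deriv (by ring)
      have h3 := (hinner.exp).const_mul (4/R)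
      refine h3.congr_deriv ?_
      field_simp
    apply hF.congr_of_eventuallyEq
    filter_upwards [lt_mem_nhds ht.1] with s hs
    simp [hG, not_le.mpr hs]
  have key := intervalIntegral.integral_eq_sub_of_hasDerivAt_of_le hδ.le hGcont hGderiv hint
  rw [key]
  simp [hG, not_le.mpr hδ]



lemma inner_t (ε δ a m : ℝ) (hε : 0 < ε) (hδ : 0 < δ) :
    ∫ t in Set.Ioc (0:ℝ) δ, (ε/(2*t)) * (Real.exp (-(a^2+ε^2)/(4*t))/(4*Real.pi*t)) * m
      = ε*m/(2*Real.pi*(a^2+ε^2)) * Real.exp (-(a^2+ε^2)/(4*δ)) := by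
  have hR : 0 < a^2+ε^2 := by positivity
  have hπ : Real.pi ≠ 0 := Real.pi_ne_zero
  have hfun : ∀ t : ℝ, (ε/(2*t)) * (Real.exp (-(a^2+ε^2)/(4*t))/(4*Real.pi*t)) * m
      = (ε*m/(8*Real.pi)) * (Real.exp (-(a^2+ε^2)/(4*t))/t^2) := by
    intro t
    rcases eq_or_ne t 0 with rfl|ht
    · simp
    · field_simp
      ring
  simp_rw [hfun]
  rw [MeasureTheory.integral_const_mul, ← intervalIntegral.integral_of_le hδ.le,
    tIntegral _ _ hR hδ]
  field_simp
  ring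

lemma swap_eq (μ : ℝ → ℝ) (hμ : Continuous μ) (hμc : HasCompactSupport μ)
    (δ ε x₁ : ℝ) (hε : 0 < ε) (hδ : 0 < δ) :
    flatLocalDoubleLayer μ δ x₁ (-ε)
      = ∫ ξ : ℝ, ε*(μ ξ)/(2*Real.pi*((x₁-ξ)^2+ε^2)) * Real.exp (-((x₁-ξ)^2+ε^2)/(4*δ)) := by
  have hπ : Real.pi ≠ 0 := Real.pi_ne_zero
  unfold flatLocalDoubleLayer
  simp only [neg_neg, neg_sq]
  rw [intervalIntegral.integral_of_le hδ.le]
  have hf : IntegrableOn (fun t : ℝ => Real.exp (-ε^2/(4*t))/t^2) (Set.Ioc 0 δ) := by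
    have h1 : IntervalIntegrable (fun t : ℝ => Real.exp (-ε^2/(4*t))/t^2) volume 0 δ := by
      apply ContinuousOn.intervalIntegrable
      rw [Set.uIcc_of_le hδ.le]
      exact contOn_exp_div_sq (ε^2) δ (by positivity)
    exact h1.1
  have hg : Integrable (fun ξ : ℝ => |μ ξ|) := (hμ.integrable_of_hasCompactSupport hμc).abs
  have hFub : Integrable (Function.uncurry fun (t ξ : ℝ) =>
      (ε/(2*t)) * (Real.exp (-((x₁-ξ)^2+ε^2)/(4*t))/(4*Real.pi*t)) * μ ξ)
      ((volume.restrict (Set.Ioc 0 δ)).prod volume) := by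
    have hbound : Integrable (fun z : ℝ×ℝ =>
        (ε/(8*Real.pi) * (Real.exp (-ε^2/(4*z.1))/z.1^2)) * |μ z.2|)
        ((volume.restrict (Set.Ioc 0 δ)).prod volume) :=
      (hf.const_mul _).mul_prod hg
    refine hbound.mono' ?_ ?_
    · apply Measurable.aestronglyMeasurable
      apply Measurable.mul
      apply Measurable.mul
      · exact (measurable_const.div ((measurable_const.mul measurable_fst)))
      · exact ((Real.measurable_exp.comp ((((measurable_const.sub measurable_snd).pow_const 2).add
          measurable_const).neg.div ((measurable_const.mul measurable_fst)))).div
          (measurable_const.mul measurable_fst))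
      · exact hμ.measurable.comp measurable_snd
    · rw [Measure.restrict_prod_eq_prod_univ]
      filter_upwards [ae_restrict_mem (measurableSet_Ioc.prod MeasurableSet.univ)] with z hz
      obtain ⟨⟨ht0, htδ⟩, -⟩ := hz
      have ht0' : z.1 ≠ 0 := ht0.ne'
      have h1 : ‖Function.uncurry (fun (t ξ : ℝ) =>
            (ε/(2*t)) * (Real.exp (-((x₁-ξ)^2+ε^2)/(4*t))/(4*Real.pi*t)) * μ ξ) z‖
          = (ε/(8*Real.pi) * (Real.exp (-((x₁-z.2)^2+ε^2)/(4*z.1))/z.1^2)) * |μ z.2| := by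
        have key : ∀ E : ℝ, ε/(2*z.1) * (E/(4*Real.pi*z.1)) = ε/(8*Real.pi) * (E/z.1^2) := by
          intro E
          rw [div_mul_div_comm, div_mul_div_comm]
          congr 1
          ring
        rw [Function.uncurry]
        rw [norm_mul, norm_mul, Real.norm_eq_abs, Real.norm_eq_abs, Real.norm_eq_abs,
          abs_of_pos (show (0:ℝ) < ε/(2*z.1) by positivity),
          abs_of_pos (show (0:ℝ) < Real.exp (-((x₁-z.2)^2+ε^2)/(4*z.1))/(4*Real.pi*z.1) by positivity),
          key]
      rw [h1]
      have hle : Real.exp (-((x₁-z.2)^2+ε^2)/(4*z.1)) ≤ Real.exp (-ε^2/(4*z.1)) := by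
        apply Real.exp_le_exp.mpr
        rw [neg_div, neg_div, neg_le_neg_iff]
        apply div_le_div_of_nonneg_right ?_ (by positivity)
        linarith [sq_nonneg (x₁ - z.2)]
      gcongr
  rw [MeasureTheory.integral_integral_swap hFub]
  congr 1
  funext ξ
  exact inner_t ε δ (x₁-ξ) (μ ξ) hε hδ

lemma subst_eq (μ : ℝ → ℝ) (δ ε x₁ : ℝ) (hε : 0 < ε) :
    (∫ ξ : ℝ, ε*(μ ξ)/(2*Real.pi*((x₁-ξ)^2+ε^2)) * Real.exp (-((x₁-ξ)^2+ε^2)/(4*δ)))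
      = ∫ y : ℝ, (2*Real.pi*(y^2+1))⁻¹ * Real.exp (-(ε^2*(y^2+1))/(4*δ)) * μ (x₁+ε*y) := by
  have hπ : Real.pi ≠ 0 := Real.pi_ne_zero
  set g : ℝ → ℝ := fun u => ε*(μ (x₁+u))/(2*Real.pi*(u^2+ε^2)) * Real.exp (-(u^2+ε^2)/(4*δ))
    with hg
  have h1 : (∫ ξ : ℝ, ε*(μ ξ)/(2*Real.pi*((x₁-ξ)^2+ε^2)) * Real.exp (-((x₁-ξ)^2+ε^2)/(4*δ)))
      = ∫ ξ : ℝ, g (ξ - x₁) := by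
    congr 1
    funext ξ
    simp only [hg]
    rw [show x₁ + (ξ - x₁) = ξ by ring, show (ξ - x₁)^2 = (x₁ - ξ)^2 by ring]
  rw [h1, integral_sub_right_eq_self g x₁]
  have h3 : (∫ y : ℝ, g (ε*y)) = |ε⁻¹| • ∫ u : ℝ, g u :=
    MeasureTheory.Measure.integral_comp_mul_left g ε
  have h4 : (∫ u : ℝ, g u) = ε * ∫ y : ℝ, g (ε*y) := by
    rw [h3, abs_of_pos (inv_pos.mpr hε), smul_eq_mul, ← mul_assoc,
      mul_inv_cancel₀ hε.ne', one_mul]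
  rw [h4, ← MeasureTheory.integral_const_mul]
  congr 1
  funext y
  simp only [hg]
  rw [show (ε*y)^2 + ε^2 = ε^2*(y^2+1) by ring]
  generalize Real.exp (-(ε^2*(y^2+1))/(4*δ)) = E
  have hy1 : (0:ℝ) < y^2+1 := by positivity
  field_simp

lemma limit_lemma (μ : ℝ → ℝ) (hμ : Continuous μ) (hμc : HasCompactSupport μ)
    (δ x₁ : ℝ) (hδ : 0 < δ) :
    Filter.Tendsto (fun ε : ℝ =>
        ∫ y : ℝ, (2*Real.pi*(y^2+1))⁻¹ * Real.exp (-(ε^2*(y^2+1))/(4*δ)) * μ (x₁+ε*y))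
      (nhdsWithin 0 (Set.Ioi 0)) (nhds (μ x₁ / 2)) := by
  obtain ⟨C, hC⟩ := hμc.exists_bound_of_continuous hμ
  have hC0 : 0 ≤ C := le_trans (norm_nonneg _) (hC 0)
  have hπ : (0:ℝ) < Real.pi := Real.pi_pos
  have key := MeasureTheory.tendsto_integral_filter_of_dominated_convergence
    (μ := (volume : Measure ℝ)) (l := nhdsWithin (0:ℝ) (Set.Ioi 0))
    (F := fun (ε : ℝ) (y : ℝ) =>
      (2*Real.pi*(y^2+1))⁻¹ * Real.exp (-(ε^2*(y^2+1))/(4*δ)) * μ (x₁+ε*y))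
    (f := fun y : ℝ => (2*Real.pi*(y^2+1))⁻¹ * μ x₁)
    (bound := fun y : ℝ => C * (2*Real.pi)⁻¹ * (1+y^2)⁻¹)
    ?_ ?_ ?_ ?_
  · have hval : (∫ y : ℝ, (2*Real.pi*(y^2+1))⁻¹ * μ x₁) = μ x₁ / 2 := by
      have he : ∀ y : ℝ, (2*Real.pi*(y^2+1))⁻¹ * μ x₁
          = (μ x₁ * (2*Real.pi)⁻¹) * (1+y^2)⁻¹ := by
        intro y
        rw [show y^2+1 = 1+y^2 from add_comm _ _, mul_inv]
        ring
      simp_rw [he]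
      rw [MeasureTheory.integral_const_mul, integral_univ_inv_one_add_sq]
      field_simp
    rwa [hval] at key
  · filter_upwards with ε
    apply Continuous.aestronglyMeasurable
    apply Continuous.mul
    apply Continuous.mul
    · exact (continuous_const.mul ((continuous_pow 2).add continuous_const)).inv₀
        (fun y => by simp only [Pi.mul_apply, Pi.add_apply]; positivity)
    · exact Real.continuous_exp.comp
        (((continuous_const.mul ((continuous_pow 2).add continuous_const)).neg).div_const _)
    · exact hμ.comp (continuous_const.add (continuous_const.mul continuous_id))
  · filter_upwards with ε
    filter_upwards with y
    have h1 : ‖(2*Real.pi*(y^2+1))⁻¹ * Real.exp (-(ε^2*(y^2+1))/(4*δ)) * μ (x₁+ε*y)‖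
        = (2*Real.pi*(y^2+1))⁻¹ * Real.exp (-(ε^2*(y^2+1))/(4*δ)) * |μ (x₁+ε*y)| := by
      rw [norm_mul, norm_mul, Real.norm_eq_abs, Real.norm_eq_abs, Real.norm_eq_abs,
        abs_of_pos (show (0:ℝ) < (2*Real.pi*(y^2+1))⁻¹ by positivity),
        abs_of_pos (Real.exp_pos _)]
    rw [h1]
    have h2 : Real.exp (-(ε^2*(y^2+1))/(4*δ)) ≤ 1 := by
      apply Real.exp_le_one_iff.mpr
      rw [neg_div, neg_nonpos]
      positivity
    have h3 : |μ (x₁+ε*y)| ≤ C := by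
      simpa [Real.norm_eq_abs] using hC (x₁+ε*y)
    calc (2*Real.pi*(y^2+1))⁻¹ * Real.exp (-(ε^2*(y^2+1))/(4*δ)) * |μ (x₁+ε*y)|
        ≤ (2*Real.pi*(y^2+1))⁻¹ * 1 * C := by gcongr
      _ = C * (2*Real.pi)⁻¹ * (1+y^2)⁻¹ := by
          rw [mul_one, show y^2+1 = 1+y^2 from add_comm _ _, mul_inv]
          ring
  · exact integrable_inv_one_add_sq.const_mul (C * (2*Real.pi)⁻¹)
  · filter_upwards with y
    have hcont : ContinuousAt (fun ε : ℝ =>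
        (2*Real.pi*(y^2+1))⁻¹ * Real.exp (-(ε^2*(y^2+1))/(4*δ)) * μ (x₁+ε*y)) 0 := by
      apply Continuous.continuousAt
      apply Continuous.mul
      apply Continuous.mul
      · exact continuous_const
      · exact Real.continuous_exp.comp
          ((((continuous_pow 2).mul continuous_const).neg).div_const _)
      · exact hμ.comp (continuous_const.add (continuous_id.mul continuous_const))
    have h0 : (fun ε : ℝ =>
        (2*Real.pi*(y^2+1))⁻¹ * Real.exp (-(ε^2*(y^2+1))/(4*δ)) * μ (x₁+ε*y)) 0
        = (2*Real.pi*(y^2+1))⁻¹ * μ x₁ := by norm_num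
    exact h0 ▸ hcont.tendsto.mono_left nhdsWithin_le_nhds

/-- Jump relations of the local double layer heat potential across the flat boundary:
approaching from below gives `μ(x₁)/2`, from above gives `-μ(x₁)/2`. -/
theorem local_double_layer_jump_relations
    (μ : ℝ → ℝ) (hμ : Continuous μ) (hμc : HasCompactSupport μ)
    (δ : ℝ) (hδ : 0 < δ) (x₁ : ℝ) :
    Filter.Tendsto (fun ε : ℝ => flatLocalDoubleLayer μ δ x₁ (-ε))
        (nhdsWithin 0 (Set.Ioi 0)) (nhds (μ x₁ / 2))
    ∧ Filter.Tendsto (fun ε : ℝ => flatLocalDoubleLayer μ δ x₁ ε)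
        (nhdsWithin 0 (Set.Ioi 0)) (nhds (-(μ x₁) / 2)) := by
  have hfirst : Filter.Tendsto (fun ε : ℝ => flatLocalDoubleLayer μ δ x₁ (-ε))
      (nhdsWithin 0 (Set.Ioi 0)) (nhds (μ x₁ / 2)) := by
    refine (limit_lemma μ hμ hμc δ x₁ hδ).congr' ?_
    filter_upwards [self_mem_nhdsWithin] with ε (hε : ε ∈ Set.Ioi (0:ℝ))
    rw [← subst_eq μ δ ε x₁ (Set.mem_Ioi.mp hε), ← swap_eq μ hμ hμc δ ε x₁ (Set.mem_Ioi.mp hε) hδ]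
  have hodd : ∀ ε : ℝ, flatLocalDoubleLayer μ δ x₁ ε = - flatLocalDoubleLayer μ δ x₁ (-ε) := by
    intro ε
    unfold flatLocalDoubleLayer
    rw [← intervalIntegral.integral_neg]
    congr 1
    funext t
    rw [← MeasureTheory.integral_neg]
    congr 1
    funext ξ
    simp only [neg_neg, neg_sq]
    ring
  refine ⟨hfirst, ?_⟩
  have h2 := hfirst.neg
  rw [show -(μ x₁ / 2) = -(μ x₁) / 2 by ring] at h2
  exact h2.congr (fun ε => (hodd ε).symm)

end Aux
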